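/- Let G be a finite group. Then the graph Γ(G) coincides with the commuting graph Γ_comm(G) (same vertex set and same edge set) if and only if every Sylow subgroup of G is abelian. -/

import Mathlib

/-- The nilpotent neighborhood of `x`: elements `y` such that `⟨x,y⟩` is nilpotent. -/
def nilNbhd {G : Type*} [Group G] (x : G) : Set G :=
  {y | Group.IsNilpotent ↥(Subgroup.closure ({x, y} : Set G))}

/-- The hypercenter of a finite group: the stable term of the upper central series. -/
noncomputable def hypercenter (G : Type*) [Group G] : Subgroup G :=
  upperCentralSeries G (Nat.card G)

instance hypercenter_normal (G : Type*) [Group G] : (hypercenter G).Normal :=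
  show (Subgroup.upperCentralSeries G (Nat.card G)).Normal from inferInstance

/-- The graph Γ(G): induced subgraph of the nilpotent graph on `G \ Z_∞(G)`. -/
def nilGraph (G : Type*) [Group G] : SimpleGraph {x : G // x ∉ hypercenter G} where
  Adj a b := a ≠ b ∧ Group.IsNilpotent ↥(Subgroup.closure ({a.1, b.1} : Set G))
  symm := ⟨fun a b ⟨h1, h2⟩ => ⟨h1.symm, by rwa [Set.pair_comm]⟩⟩
  loopless := ⟨fun a h => h.1 rfl⟩

/-- The commuting graph on the non-central elements. -/
def commGraph (G : Type*) [Group G] : SimpleGraph {x : G // x ∉ Subgroup.center G} where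
  Adj a b := a ≠ b ∧ a.1 * b.1 = b.1 * a.1
  symm := ⟨fun a b ⟨h1, h2⟩ => ⟨h1.symm, h2.symm⟩⟩
  loopless := ⟨fun a h => h.1 rfl⟩

/-- Diameter of a connected component: diameter of the induced subgraph on its support. -/
noncomputable def compDiam {V : Type*} (Γ : SimpleGraph V) (c : Γ.ConnectedComponent) : ℕ :=
  (Γ.induce c.supp).diam

/-- `H` is a Frobenius complement in `G`. -/
def IsFrobeniusComplement {G : Type*} [Group G] (H : Subgroup G) : Prop :=
  H ≠ ⊥ ∧ H ≠ ⊤ ∧ ∀ g : G, g ∉ H → H ⊓ H.map (MulAut.conj g).toMonoidHom = ⊥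

/-- `G` is a Frobenius group. -/
def IsFrobenius (G : Type*) [Group G] : Prop :=
  ∃ H : Subgroup G, IsFrobeniusComplement H

/-- `K` is the Frobenius kernel corresponding to the complement `H`. -/
def IsFrobeniusKernelOf {G : Type*} [Group G] (K H : Subgroup G) : Prop :=
  IsFrobeniusComplement H ∧
    (K : Set G) = {1} ∪ {x : G | ∀ g : G, x ∉ H.map (MulAut.conj g).toMonoidHom}

/-- `K` is a Frobenius kernel of `G`. -/
def IsFrobeniusKernel {G : Type*} [Group G] (K : Subgroup G) : Prop :=
  ∃ H : Subgroup G, IsFrobeniusKernelOf K H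

/-- `G` is a 2-Frobenius group. -/
def IsTwoFrobenius (G : Type*) [Group G] : Prop :=
  ∃ K L : Subgroup G, ∃ hK : K.Normal, L.Normal ∧ K ≤ L ∧
    IsFrobeniusKernel (K.subgroupOf L) ∧
    (haveI := hK; IsFrobeniusKernel (Subgroup.map (QuotientGroup.mk' K) L))

/-- The Fitting subgroup: the largest normal nilpotent subgroup (of a finite group). -/
def fitting (G : Type*) [Group G] : Subgroup G :=
  sSup {H : Subgroup G | H.Normal ∧ Group.IsNilpotent ↥H}

/-!
In an A-group a nilpotent subgroup is the direct product of its Sylow subgroups, which are abelian,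
so it is abelian: two elements generate a nilpotent subgroup exactly when they commute. An element
of the hypercenter generates a nilpotent subgroup together with any other element, hence it is
central. Conversely, if nilpotent adjacency is commutation, two non-commuting elements of a Sylow
`p`-subgroup would be distinct non-central elements generating a `p`-group, which is nilpotent.
-/

open Subgroup Group

section NilpotentPairs

variable {G : Type*} [Group G]

theorem Group.isNilpotent_of_isMulCommutative [h : IsMulCommutative G] : IsNilpotent G :=
  ⟨1, upperCentralSeries_one_eq_top_iff.mpr h⟩

theorem Subgroup.isNilpotent_closure_pair_of_mul_comm {x y : G} (h : x * y = y * x) :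
    IsNilpotent (closure {x, y}) :=
  have : IsMulCommutative (closure {x, y}) :=
    isMulCommutative_closure (by rintro _ (rfl | rfl) _ (rfl | rfl) <;> simp [h])
  isNilpotent_of_isMulCommutative

/-- Induction on `n`: modulo the center, `x` lies one step lower in the upper central series, and
`⟨x, y⟩` is a central extension of its image in `G ⧸ center G`. -/
theorem Subgroup.isNilpotent_closure_pair_of_mem_upperCentralSeries {n : ℕ} {x : G}
    (hx : x ∈ upperCentralSeries G n) (y : G) : IsNilpotent (closure {x, y}) := by
  induction n generalizing G with
  | zero =>
    obtain rfl : x = 1 := hx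
    exact isNilpotent_closure_pair_of_mul_comm (by simp)
  | succ n ih =>
    let π := QuotientGroup.mk' (center G)
    rw [← comap_upperCentralSeries_quotient_center] at hx
    have hImage := ih hx (π y)
    rw [← Set.image_pair, ← MonoidHom.map_closure] at hImage
    refine isNilpotent_of_ker_le_center (π.subgroupMap _) fun g hg => ?_
    have hgCenter : (g : G) ∈ center G := by
      simpa [π] using congrArg Subtype.val (MonoidHom.mem_ker.mp hg)
    exact mem_center_iff.mpr fun k => Subtype.ext (mem_center_iff.mp hgCenter k)

end NilpotentPairs

section AGroups

variable {G : Type*} [Group G]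

theorem Subgroup.isMulCommutative_sylow
    (hA : ∀ (p : ℕ), p.Prime → ∀ P : Sylow p G, IsMulCommutative (P : Subgroup G))
    (H : Subgroup G) {p : ℕ} (hp : p.Prime) (P : Sylow p H) :
    IsMulCommutative (P : Subgroup H) := by
  have : Fact p.Prime := ⟨hp⟩
  obtain ⟨Q, hPQ⟩ := (P.isPGroup'.map H.subtype).exists_le_sylow
  have := hA p hp Q
  refine isMulCommutative_iff.mpr fun u v => Subtype.ext (Subtype.ext ?_)
  exact setLike_mul_comm (s := (Q : Subgroup G))
    (hPQ ⟨u, u.2, rfl⟩) (hPQ ⟨v, v.2, rfl⟩)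

variable [Finite G]

theorem Group.isMulCommutative_of_isNilpotent [IsNilpotent G]
    (hA : ∀ (p : ℕ), p.Prime → ∀ P : Sylow p G, IsMulCommutative (P : Subgroup G)) :
    IsMulCommutative G := by
  -- a finite nilpotent group is the direct product of its Sylow subgroups
  obtain ⟨e⟩ := (isNilpotent_of_finite_tfae (G := G)).out 0 4 |>.mp ‹_›
  have : ∀ (p : (Nat.card G).primeFactors) (P : Sylow p G), IsMulCommutative (P : Subgroup G) :=
    fun p => hA p (Nat.prime_of_mem_primeFactors p.2)
  exact e.surjective.mul_comm (f := e.toMulHom) inferInstance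

theorem Subgroup.mul_comm_of_isNilpotent_closure_pair
    (hA : ∀ (p : ℕ), p.Prime → ∀ P : Sylow p G, IsMulCommutative (P : Subgroup G))
    {x y : G} (h : IsNilpotent (closure {x, y})) : x * y = y * x := by
  have := isMulCommutative_of_isNilpotent (G := closure {x, y})
    fun _ hp P => isMulCommutative_sylow hA _ hp P
  exact setLike_mul_comm (s := closure {x, y})
    (subset_closure (Set.mem_insert x _)) (subset_closure (Set.mem_insert_of_mem x rfl))

end AGroups

/-- Theorem D: Γ(G) coincides with the commuting graph iff G is an A-group. -/
theorem stmt_3 (G : Type*) [Group G] [Finite G] :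
    (((hypercenter G : Set G) = (Subgroup.center G : Set G)) ∧
        ∀ x y : G, x ∉ Subgroup.center G → y ∉ Subgroup.center G → x ≠ y →
          (Group.IsNilpotent ↥(Subgroup.closure ({x, y} : Set G)) ↔ x * y = y * x)) ↔
      ∀ (p : ℕ), p.Prime → ∀ P : Sylow p G, IsMulCommutative ↥(P : Subgroup G) := by
  constructor
  · rintro ⟨-, hGraph⟩ p hp P
    have : Fact p.Prime := ⟨hp⟩
    refine isMulCommutative_iff.mpr fun a b => Subtype.ext ?_
    change (a : G) * b = b * a
    by_contra hne
    have haCenter : (a : G) ∉ center G := fun h => hne (mem_center_iff.mp h b).symm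
    have hbCenter : (b : G) ∉ center G := fun h => hne (mem_center_iff.mp h a)
    have hab : (a : G) ≠ b := fun h => hne (by rw [h])
    have hle : closure ({(a : G), (b : G)} : Set G) ≤ P := by
      rw [closure_le]
      rintro _ (rfl | rfl) <;> simp
    exact hne <| (hGraph a b haCenter hbCenter hab).mp (P.isPGroup'.to_le hle).isNilpotent
  · intro hA
    refine ⟨?_, fun x y _ _ _ => ⟨mul_comm_of_isNilpotent_closure_pair hA,
      isNilpotent_closure_pair_of_mul_comm⟩⟩
    refine Set.Subset.antisymm (fun z hz => mem_center_iff.mpr fun g => ?_) ?_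
    · exact (mul_comm_of_isNilpotent_closure_pair hA
        (isNilpotent_closure_pair_of_mem_upperCentralSeries hz g)).symm
    · rw [← Subgroup.upperCentralSeries_one]
      exact Subgroup.upperCentralSeries_mono G Nat.card_pos
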